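/- Under the SPS setup, suppose additionally that ρ_k ≤ ρ̄ < 1/L for all k. Then for every p* = (z*, w_1*, …, w_{n+1}*) ∈ S and every k, almost surely E[ ⟨z^k − x_{n+1}^k, y_{n+1}^k − w_{n+1}^k⟩ − ⟨z* − x_{n+1}^k, y_{n+1}^k − w_{n+1}*⟩ | 𝔉_k ] ≥ ρ_k(1 − ρ̄L) ‖B(z^k) − w_{n+1}^k‖² − 2ρ_k² N L³ ‖p^k − p*‖² − ρ_k² N L (1 + 2‖B(z*)‖²). -/

import Mathlib

/-!
Write `x = z - ρ • u` with `u = B z - w + ε`. The gap equals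
`ρ ⟪u, B x - B z⟫ + ρ ⟪u, B z - w⟫ + ⟪B x - B z*, x - z*⟫ + ⟪z - z*, e⟫`; Lipschitz continuity
bounds the first term below by `-ρ² L ‖u‖²` and monotonicity makes the third nonnegative.
After expanding `u`, the terms linear in `ε` and `e` have zero conditional mean since their other
factors are `𝔉_k`-measurable, and the remaining `E[‖ε‖² | 𝔉_k]` is controlled by the variance bound
together with `‖B z‖² ≤ 2 ‖B z*‖² + 2 L² ‖z - z*‖²`.
-/

open MeasureTheory Filter
open scoped RealInnerProductSpace BigOperators NNReal

noncomputable section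

/-- `Ed d` is Euclidean space `ℝ^d`. -/
abbrev Ed (d : ℕ) := EuclideanSpace ℝ (Fin d)

/-- A set-valued operator `A : ℝ^d → Set (ℝ^d)` is monotone. -/
def IsMonotoneOp {d : ℕ} (A : Ed d → Set (Ed d)) : Prop :=
  ∀ ⦃x y u v : Ed d⦄, u ∈ A x → v ∈ A y → 0 ≤ ⟪u - v, x - y⟫

/-- A set-valued operator is maximal monotone: monotone and its graph admits
no proper monotone extension. -/
def IsMaximalMonotoneOp {d : ℕ} (A : Ed d → Set (Ed d)) : Prop :=
  IsMonotoneOp A ∧ ∀ A' : Ed d → Set (Ed d), IsMonotoneOp A' → (∀ u, A u ⊆ A' u) → A' = A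

/-- The extended solution set `S` of `0 ∈ ∑ᵢ Aᵢ(z) + B(z)`. -/
def extSolSet {d n : ℕ} (A : Fin n → Ed d → Set (Ed d)) (B : Ed d → Ed d) :
    Set (Ed d × (Fin (n + 1) → Ed d)) :=
  {p | (∀ i : Fin n, p.2 i.castSucc ∈ A i p.1) ∧ p.2 (Fin.last n) = B p.1 ∧ ∑ i, p.2 i = 0}

/-- Squared Euclidean distance `‖p - q‖²` in the product space `ℝ^{(n+2)d}`, for
`p = (z, w₁, …, w_{n+1})` and `q`. -/
def pDistSq {d n : ℕ} (z : Ed d) (w : Fin (n + 1) → Ed d)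
    (q : Ed d × (Fin (n + 1) → Ed d)) : ℝ :=
  ‖z - q.1‖ ^ 2 + ∑ i, ‖w i - q.2 i‖ ^ 2

/-- The σ-algebra `𝔉_k = σ(p¹, …, p^k)` generated by the first `k` SPS iterates. -/
def spsSigma {d n : ℕ} {Ω : Type} [MeasurableSpace Ω]
    (z : ℕ → Ω → Ed d) (w : ℕ → Fin (n + 1) → Ω → Ed d) (k : ℕ) : MeasurableSpace Ω :=
  ⨆ j ∈ Set.Icc 1 k,
    MeasurableSpace.comap (fun ω => (z j ω, fun i => w j i ω)) inferInstance

/-- The constant `C₁`. -/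
def spsC1 (n : ℕ) (τ L N ρb : ℝ) : ℝ :=
  24 * (1 + 10 * ρb ^ 2) * ((n : ℝ) + 1) * (L ^ 2 + 1) ^ 2 * (N + 1) ^ 2
    + 8 * ((n : ℝ) + 1) * (2 * τ ^ 2 + 6 * ((n : ℝ) + 1) + 1 + 3 * ((n : ℝ) + 1) ^ 2 / τ ^ 2)

/-- The constant `C₂`; here `Bz = B(z*)` and `sw = ∑_{i=1}^n wᵢ*`. -/
def spsC2 {d : ℕ} (n : ℕ) (L N ρb : ℝ) (Bz sw : Ed d) : ℝ :=
  16 * (N + 1) * (1 + 4 * ρb ^ 2 * ((n : ℝ) + 1) + 9 * ρb ^ 2 * L ^ 2 * (N + 1)) * ‖Bz‖ ^ 2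
    + 8 * ‖sw‖ ^ 2 + 12 * ρb ^ 2 * N * (2 * L ^ 2 * (N + 1) + (n : ℝ) + 1) + 4 * N

/-- The constant `C₃`. -/
def spsC3 (L N : ℝ) : ℝ := 4 * N * L ^ 3

/-- The constant `C₄`; here `Bz = B(z*)`. -/
def spsC4 {d : ℕ} (L N : ℝ) (Bz : Ed d) : ℝ := 2 * N * L * (1 + 2 * ‖Bz‖ ^ 2)


section InnerProductSpace

variable {E : Type*} [NormedAddCommGroup E] [InnerProductSpace ℝ E]
  {B : E → E} {L ρ : ℝ}

lemma inner_forward_step_ge (hρ : 0 ≤ ρ) (hBlip : ∀ u v : E, ‖B u - B v‖ ≤ L * ‖u - v‖)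
    (z u : E) : -(ρ ^ 2 * L * ‖u‖ ^ 2) ≤ ρ * ⟪u, B (z - ρ • u) - B z⟫ := by
  have hB : ‖B (z - ρ • u) - B z‖ ≤ L * (ρ * ‖u‖) := by
    simpa [norm_smul, abs_of_nonneg hρ] using hBlip (z - ρ • u) z
  have hCS := neg_le_of_abs_le (abs_real_inner_le_norm u (B (z - ρ • u) - B z))
  have := mul_le_mul_of_nonneg_left hB (norm_nonneg u)
  nlinarith [mul_le_mul_of_nonneg_left hCS hρ]

lemma forward_step_gap_ge (hρ : 0 ≤ ρ) (hBmono : ∀ u v : E, 0 ≤ ⟪B u - B v, u - v⟫)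
    (hBlip : ∀ u v : E, ‖B u - B v‖ ≤ L * ‖u - v‖) {z zs w a e x : E}
    (hx : x = z - ρ • (B z + a - w)) :
    (ρ - ρ ^ 2 * L) * ‖B z - w‖ ^ 2 + ⟪(ρ - 2 * ρ ^ 2 * L) • (B z - w), a⟫
        + ⟪z - zs, e⟫ - ρ ^ 2 * L * ‖a‖ ^ 2
      ≤ ⟪z - x, B x + e - w⟫ - ⟪zs - x, B x + e - B zs⟫ := by
  set c := B z - w
  have hx' : x = z - ρ • (c + a) := by rw [hx, ← sub_add_eq_add_sub]
  have hsplit : ⟪z - x, B x + e - w⟫ - ⟪zs - x, B x + e - B zs⟫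
      = ρ * ⟪c + a, B x - B z⟫ + ρ * ⟪c + a, c⟫ + ⟪B x - B zs, x - zs⟫ + ⟪z - zs, e⟫ := by
    generalize B x = bx
    subst hx'
    simp only [c, inner_sub_left, inner_sub_right, inner_add_left, inner_add_right,
      real_inner_smul_right, real_inner_comm]
    ring
  have hfwd := inner_forward_step_ge hρ hBlip z (c + a)
  rw [← hx', norm_add_sq_real] at hfwd
  have hc : ⟪c + a, c⟫ = ‖c‖ ^ 2 + ⟪c, a⟫ := by
    rw [inner_add_left, real_inner_self_eq_norm_sq, real_inner_comm]
  rw [hsplit, real_inner_smul_left, hc]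
  nlinarith [hBmono x zs]

end InnerProductSpace

section ConditionalExpectation

variable {Ω E : Type*} {m m0 : MeasurableSpace Ω} {P : Measure Ω}
  [NormedAddCommGroup E]

theorem LipschitzWith.memLp_comp [IsFiniteMeasure P] {F : Type*} [NormedAddCommGroup F]
    {K : ℝ≥0} {B : E → F} (hB : LipschitzWith K B) {p : ENNReal} {f : Ω → E}
    (hf : MemLp f p P) : MemLp (fun ω => B (f ω)) p P := by
  refine ((hf.norm.const_mul K).add (memLp_const ‖B 0‖)).of_le
    (hB.continuous.comp_aestronglyMeasurable hf.1) (ae_of_all _ fun ω => ?_)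
  have := hB.norm_sub_le (f ω) 0
  rw [sub_zero] at this
  rw [Real.norm_eq_abs, Pi.add_apply]
  calc ‖B (f ω)‖ ≤ ‖B (f ω) - B 0‖ + ‖B 0‖ := norm_le_norm_sub_add _ _
    _ ≤ K * ‖f ω‖ + ‖B 0‖ := by gcongr
    _ ≤ _ := le_abs_self _

variable [InnerProductSpace ℝ E]

theorem MeasureTheory.MemLp.integrable_inner {f g : Ω → E} (hf : MemLp f 2 P)
    (hg : MemLp g 2 P) : Integrable (fun ω => ⟪f ω, g ω⟫) P :=
  memLp_one_iff_integrable.1 ((innerSL ℝ).memLp_of_bilin 1 hf hg)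

theorem condExp_add_inner_of_condExp_eq_zero [CompleteSpace E] {g : Ω → ℝ} {φ ξ : Ω → E}
    (hg : Integrable g P) (hφ : StronglyMeasurable[m] φ)
    (hφξ : Integrable (fun ω => ⟪φ ω, ξ ω⟫) P) (hξ : Integrable ξ P) (hξ0 : P[ξ|m] =ᵐ[P] 0) :
    P[fun ω => g ω + ⟪φ ω, ξ ω⟫|m] =ᵐ[P] P[g|m] := by
  have hpull : P[fun ω => ⟪φ ω, ξ ω⟫|m] =ᵐ[P] fun ω => ⟪φ ω, P[ξ|m] ω⟫ :=
    condExp_bilin_of_stronglyMeasurable_left (innerSL ℝ) hφ hφξ hξ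
  filter_upwards [condExp_add hg hφξ m, hpull, hξ0] with ω hadd hpull h0
  change P[g + fun ω => ⟪φ ω, ξ ω⟫|m] ω = _
  rw [hadd, Pi.add_apply, hpull, h0, Pi.zero_apply, inner_zero_right, add_zero]

end ConditionalExpectation

section StochasticForwardStep

variable {Ω E : Type*} {m m0 : MeasurableSpace Ω} {P : Measure Ω}
  [NormedAddCommGroup E] [InnerProductSpace ℝ E] [CompleteSpace E]

theorem condExp_sq_add_inner_add_inner_sub_sq_ae_eq (hm : m ≤ m0) [IsFiniteMeasure P]
    (a b κ : ℝ) {c v ε e : Ω → E} (hc : StronglyMeasurable[m] c) (hv : StronglyMeasurable[m] v)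
    (hc2 : MemLp c 2 P) (hv2 : MemLp v 2 P) (hε2 : MemLp ε 2 P) (he2 : MemLp e 2 P)
    (hε0 : P[ε|m] =ᵐ[P] 0) (he0 : P[e|m] =ᵐ[P] 0) :
    P[fun ω => a * ‖c ω‖ ^ 2 + ⟪b • c ω, ε ω⟫ + ⟪v ω, e ω⟫ - κ * ‖ε ω‖ ^ 2|m]
      =ᵐ[P] fun ω => a * ‖c ω‖ ^ 2 - κ * P[fun ω => ‖ε ω‖ ^ 2|m] ω := by
  set g := fun ω => a * ‖c ω‖ ^ 2
  have hg : Integrable g P := (hc2.integrable_norm_pow two_ne_zero).const_mul _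
  have hcε : Integrable (fun ω => ⟪b • c ω, ε ω⟫) P := (hc2.const_smul _).integrable_inner hε2
  have hve : Integrable (fun ω => ⟪v ω, e ω⟫) P := hv2.integrable_inner he2
  have hsub : P[fun ω => g ω + ⟪b • c ω, ε ω⟫ + ⟪v ω, e ω⟫ - κ * ‖ε ω‖ ^ 2|m]
      =ᵐ[P] P[fun ω => g ω + ⟪b • c ω, ε ω⟫ + ⟪v ω, e ω⟫|m]
        - P[fun ω => κ * ‖ε ω‖ ^ 2|m] :=
    condExp_sub ((hg.add hcε).add hve) ((hε2.integrable_norm_pow two_ne_zero).const_mul _) m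
  have hnoise : P[fun ω => g ω + ⟪b • c ω, ε ω⟫ + ⟪v ω, e ω⟫|m] =ᵐ[P] P[g|m] :=
    (condExp_add_inner_of_condExp_eq_zero (hg.add hcε) hv hve (he2.integrable one_le_two)
      he0).trans
    (condExp_add_inner_of_condExp_eq_zero hg (hc.const_smul _) hcε (hε2.integrable one_le_two)
      hε0)
  have hsmul : P[fun ω => κ * ‖ε ω‖ ^ 2|m] =ᵐ[P] fun ω => κ * P[fun ω => ‖ε ω‖ ^ 2|m] ω :=
    condExp_smul κ (fun ω => ‖ε ω‖ ^ 2) m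
  have hgm : P[g|m] = g := condExp_of_stronglyMeasurable hm ((hc.norm.pow 2).const_mul _) hg
  filter_upwards [hsub, hnoise, hsmul] with ω hsub hnoise hsmul
  rw [hsub, Pi.sub_apply, hnoise, hsmul, hgm]

theorem condExp_forward_step_gap_ge (hm : m ≤ m0) [IsFiniteMeasure P] {B : E → E} {L ρ : ℝ}
    (hρ : 0 ≤ ρ) (hBmono : ∀ u v : E, 0 ≤ ⟪B u - B v, u - v⟫)
    (hBlip : ∀ u v : E, ‖B u - B v‖ ≤ L * ‖u - v‖) {z w ε e x y : Ω → E} (zs : E)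
    (hz : StronglyMeasurable[m] z) (hw : StronglyMeasurable[m] w)
    (hz2 : MemLp z 2 P) (hw2 : MemLp w 2 P) (hε2 : MemLp ε 2 P) (he2 : MemLp e 2 P)
    (hε0 : P[ε|m] =ᵐ[P] 0) (he0 : P[e|m] =ᵐ[P] 0)
    (hx : ∀ ω, x ω = z ω - ρ • (B (z ω) + ε ω - w ω)) (hy : ∀ ω, y ω = B (x ω) + e ω) :
    ∀ᵐ ω ∂P, (ρ - ρ ^ 2 * L) * ‖B (z ω) - w ω‖ ^ 2 - ρ ^ 2 * L * P[fun ω => ‖ε ω‖ ^ 2|m] ω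
      ≤ P[fun ω => ⟪z ω - x ω, y ω - w ω⟫ - ⟪zs - x ω, y ω - B zs⟫|m] ω := by
  have hBlipW : LipschitzWith L.toNNReal B :=
    LipschitzWith.of_dist_le' fun u v => by simpa only [dist_eq_norm] using hBlip u v
  have hBz2 : MemLp (fun ω => B (z ω)) 2 P := hBlipW.memLp_comp hz2
  have hc2 : MemLp (fun ω => B (z ω) - w ω) 2 P := hBz2.sub hw2
  have hzs2 : MemLp (fun ω => z ω - zs) 2 P := hz2.sub (memLp_const zs)
  have hx2 : MemLp x 2 P := by
    rw [show x = z - ρ • ((fun ω => B (z ω)) + ε - w) from funext hx]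
    exact hz2.sub (((hBz2.add hε2).sub hw2).const_smul ρ)
  have hy2 : MemLp y 2 P := by
    rw [show y = (fun ω => B (x ω)) + e from funext hy]
    exact (hBlipW.memLp_comp hx2).add he2
  have hlower := condExp_mono (m := m)
    (f := fun ω => (ρ - ρ ^ 2 * L) * ‖B (z ω) - w ω‖ ^ 2
      + ⟪(ρ - 2 * ρ ^ 2 * L) • (B (z ω) - w ω), ε ω⟫ + ⟪z ω - zs, e ω⟫ - ρ ^ 2 * L * ‖ε ω‖ ^ 2)
    (g := fun ω => ⟪z ω - x ω, y ω - w ω⟫ - ⟪zs - x ω, y ω - B zs⟫)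
    ((((hc2.integrable_norm_pow two_ne_zero).const_mul _).add
      ((hc2.const_smul _).integrable_inner hε2)).add (hzs2.integrable_inner he2) |>.sub
        ((hε2.integrable_norm_pow two_ne_zero).const_mul _))
    (((hz2.sub hx2).integrable_inner (hy2.sub hw2)).sub
      (((memLp_const zs).sub hx2).integrable_inner (hy2.sub (memLp_const (B zs)))))
    (ae_of_all P fun ω => by
      simp only [hy]
      exact forward_step_gap_ge hρ hBmono hBlip (hx ω))
  filter_upwards [hlower, condExp_sq_add_inner_add_inner_sub_sq_ae_eq hm _ _ _
    ((hBlipW.continuous.comp_stronglyMeasurable hz).sub hw) (hz.sub stronglyMeasurable_const)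
    hc2 hzs2 hε2 he2 hε0 he0] with ω hlower hH
  exact hH ▸ hlower

end StochasticForwardStep

section SPS

variable {d n : ℕ} {Ω : Type} [MeasurableSpace Ω]
  {z : ℕ → Ω → Ed d} {w : ℕ → Fin (n + 1) → Ω → Ed d}

lemma spsSigma_le (hzm : ∀ k, Measurable (z k)) (hwm : ∀ k i, Measurable (w k i)) (k : ℕ) :
    spsSigma z w k ≤ ‹MeasurableSpace Ω› :=
  iSup₂_le fun j _ => measurable_iff_comap_le.mp ((hzm j).prodMk (measurable_pi_lambda _ (hwm j)))

lemma measurable_spsSigma_iterate {k : ℕ} (hk : 1 ≤ k) :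
    Measurable[spsSigma z w k] fun ω => (z k ω, fun i => w k i ω) :=
  measurable_iff_comap_le.mpr <| le_iSup₂_of_le (f := fun j (_ : j ∈ Set.Icc 1 k) =>
    MeasurableSpace.comap (fun ω => (z j ω, fun i => w j i ω)) inferInstance) k ⟨hk, le_rfl⟩ le_rfl

end SPS

lemma norm_sub_sq_le_pDistSq {d n : ℕ} (z : Ed d) (w : Fin (n + 1) → Ed d)
    (q : Ed d × (Fin (n + 1) → Ed d)) : ‖z - q.1‖ ^ 2 ≤ pDistSq z w q :=
  le_add_of_nonneg_right (Finset.sum_nonneg fun _ _ => sq_nonneg _)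

lemma sq_norm_le_of_norm_sub_le {E : Type*} [SeminormedAddCommGroup E] {a b : E} {r : ℝ}
    (h : ‖a - b‖ ≤ r) : ‖a‖ ^ 2 ≤ 2 * ‖b‖ ^ 2 + 2 * r ^ 2 := by
  have hab := norm_le_norm_sub_add a b
  nlinarith [sq_nonneg (‖b‖ - r), norm_nonneg (a - b), norm_nonneg a]

theorem sps_last_gap_lower_bound_general
    {d n : ℕ}
    (ρ : ℕ → ℝ) (hρ : ∀ k, 1 ≤ k → 0 < ρ k)
    (A : Fin n → Ed d → Set (Ed d))
    (B : Ed d → Ed d) (L : ℝ) (hL : 0 < L)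
    (hBmono : ∀ u v : Ed d, 0 ≤ ⟪B u - B v, u - v⟫)
    (hBlip : ∀ u v : Ed d, ‖B u - B v‖ ≤ L * ‖u - v‖)
    {Ω : Type} [MeasurableSpace Ω] (P : Measure Ω) [IsProbabilityMeasure P]
    (z : ℕ → Ω → Ed d) (w x y : ℕ → Fin (n + 1) → Ω → Ed d) (ε e : ℕ → Ω → Ed d)
    (hzm : ∀ k, Measurable (z k)) (hwm : ∀ k i, Measurable (w k i))
    (hxl : ∀ k, 1 ≤ k → ∀ ω : Ω,
      x k (Fin.last n) ω = z k ω - ρ k • (B (z k ω) + ε k ω - w k (Fin.last n) ω))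
    (hyl : ∀ k, 1 ≤ k → ∀ ω : Ω, y k (Fin.last n) ω = B (x k (Fin.last n) ω) + e k ω)
    (N : ℝ) (hN : 0 ≤ N)
    (hεL2 : ∀ k, 1 ≤ k → MemLp (ε k) 2 P) (heL2 : ∀ k, 1 ≤ k → MemLp (e k) 2 P)
    (hzL2 : ∀ k, 1 ≤ k → MemLp (z k) 2 P) (hwL2 : ∀ k, 1 ≤ k → ∀ i, MemLp (w k i) 2 P)
    (hε0 : ∀ k, 1 ≤ k → ∀ᵐ ω ∂P, (P[ε k | spsSigma z w k]) ω = 0)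
    (he0 : ∀ k, 1 ≤ k → ∀ᵐ ω ∂P, (P[e k | spsSigma z w k]) ω = 0)
    (hεv : ∀ k, 1 ≤ k → ∀ᵐ ω ∂P,
      (P[fun ω' => ‖ε k ω'‖ ^ 2 | spsSigma z w k]) ω ≤ N + N * ‖B (z k ω)‖ ^ 2)
    (ρb : ℝ) (hρb : ∀ k, 1 ≤ k → ρ k ≤ ρb) :
    ∀ ps ∈ extSolSet A B, ∀ k, 1 ≤ k → ∀ᵐ ω ∂P,
      ρ k * (1 - ρb * L) * ‖B (z k ω) - w k (Fin.last n) ω‖ ^ 2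
        - 2 * (ρ k) ^ 2 * N * L ^ 3 * pDistSq (z k ω) (fun i => w k i ω) ps
        - (ρ k) ^ 2 * N * L * (1 + 2 * ‖B ps.1‖ ^ 2)
      ≤ (P[fun ω' =>
            ⟪z k ω' - x k (Fin.last n) ω', y k (Fin.last n) ω' - w k (Fin.last n) ω'⟫
            - ⟪ps.1 - x k (Fin.last n) ω', y k (Fin.last n) ω' - ps.2 (Fin.last n)⟫ |
          spsSigma z w k]) ω := by
  intro ps hps k hk
  have hiter := measurable_spsSigma_iterate (z := z) (w := w) hk
  have hgap := condExp_forward_step_gap_ge (spsSigma_le hzm hwm k) (hρ k hk).le hBmono hBlip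
    (z := z k) (w := w k (Fin.last n)) ps.1 (measurable_fst.comp hiter).stronglyMeasurable
    ((measurable_pi_apply _).comp (measurable_snd.comp hiter)).stronglyMeasurable
    (hzL2 k hk) (hwL2 k hk _) (hεL2 k hk) (heL2 k hk) (hε0 k hk) (he0 k hk) (hxl k hk) (hyl k hk)
  rw [hps.2.1]
  filter_upwards [hgap, hεv k hk] with ω hgap hvar
  refine le_trans ?_ hgap
  have hBz : ‖B (z k ω)‖ ^ 2
      ≤ 2 * ‖B ps.1‖ ^ 2 + 2 * L ^ 2 * pDistSq (z k ω) (fun i => w k i ω) ps := by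
    have := sq_norm_le_of_norm_sub_le (hBlip (z k ω) ps.1)
    nlinarith [norm_sub_sq_le_pDistSq (z k ω) (fun i => w k i ω) ps]
  have hρk := hρ k hk
  nlinarith [mul_le_mul_of_nonneg_left hvar (by positivity : 0 ≤ ρ k ^ 2 * L),
    mul_le_mul_of_nonneg_left hBz (by positivity : 0 ≤ ρ k ^ 2 * L * N),
    mul_nonneg (mul_nonneg (mul_nonneg hρk.le hL.le) (sub_nonneg.2 (hρb k hk)))
      (sq_nonneg ‖B (z k ω) - w k (Fin.last n) ω‖)]

/-- conditional lower bound on the `φ_{n+1,k}`-gap. -/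
theorem sps_last_gap_lower_bound
    {d n : ℕ} (hd : 1 ≤ d) (hn : 1 ≤ n)
    (τ : ℝ) (hτ : 0 < τ)
    (α ρ : ℕ → ℝ) (hα : ∀ k, 1 ≤ k → 0 < α k) (hρ : ∀ k, 1 ≤ k → 0 < ρ k)
    (A : Fin n → Ed d → Set (Ed d)) (hA : ∀ i, IsMaximalMonotoneOp (A i))
    (B : Ed d → Ed d) (L : ℝ) (hL : 0 < L)
    (hBmono : ∀ u v : Ed d, 0 ≤ ⟪B u - B v, u - v⟫)
    (hBlip : ∀ u v : Ed d, ‖B u - B v‖ ≤ L * ‖u - v‖)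
    (hS : (extSolSet A B).Nonempty)
    {Ω : Type} [MeasurableSpace Ω] (P : Measure Ω) [IsProbabilityMeasure P]
    (z : ℕ → Ω → Ed d) (w x y : ℕ → Fin (n + 1) → Ω → Ed d) (ε e : ℕ → Ω → Ed d)
    (hzm : ∀ k, Measurable (z k)) (hwm : ∀ k i, Measurable (w k i))
    (hxm : ∀ k i, Measurable (x k i)) (hym : ∀ k i, Measurable (y k i))
    (hεm : ∀ k, Measurable (ε k)) (hem : ∀ k, Measurable (e k))
    (hw1 : ∀ ω, ∑ i, w 1 i ω = 0)
    (hyd : ∀ k, 1 ≤ k → ∀ (i : Fin n) (ω : Ω),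
      y k i.castSucc ω = τ⁻¹ • (z k ω + τ • w k i.castSucc ω - x k i.castSucc ω))
    (hyres : ∀ k, 1 ≤ k → ∀ (i : Fin n) (ω : Ω), y k i.castSucc ω ∈ A i (x k i.castSucc ω))
    (hxl : ∀ k, 1 ≤ k → ∀ ω : Ω,
      x k (Fin.last n) ω = z k ω - ρ k • (B (z k ω) + ε k ω - w k (Fin.last n) ω))
    (hyl : ∀ k, 1 ≤ k → ∀ ω : Ω, y k (Fin.last n) ω = B (x k (Fin.last n) ω) + e k ω)
    (hzu : ∀ k, 1 ≤ k → ∀ ω : Ω, z (k + 1) ω = z k ω - α k • ∑ i, y k i ω)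
    (hwu : ∀ k, 1 ≤ k → ∀ (i : Fin (n + 1)) (ω : Ω),
      w (k + 1) i ω = w k i ω - α k • (x k i ω - ((n : ℝ) + 1)⁻¹ • ∑ j, x k j ω))
    (N : ℝ) (hN : 0 ≤ N)
    (hεL2 : ∀ k, 1 ≤ k → MemLp (ε k) 2 P) (heL2 : ∀ k, 1 ≤ k → MemLp (e k) 2 P)
    (hzL2 : ∀ k, 1 ≤ k → MemLp (z k) 2 P) (hwL2 : ∀ k, 1 ≤ k → ∀ i, MemLp (w k i) 2 P)
    (hε0 : ∀ k, 1 ≤ k → ∀ᵐ ω ∂P, (P[ε k | spsSigma z w k]) ω = 0)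
    (he0 : ∀ k, 1 ≤ k → ∀ᵐ ω ∂P, (P[e k | spsSigma z w k]) ω = 0)
    (hεv : ∀ k, 1 ≤ k → ∀ᵐ ω ∂P,
      (P[fun ω' => ‖ε k ω'‖ ^ 2 | spsSigma z w k]) ω ≤ N + N * ‖B (z k ω)‖ ^ 2)
    (hev : ∀ k, 1 ≤ k → ∀ᵐ ω ∂P,
      (P[fun ω' => ‖e k ω'‖ ^ 2 |
          spsSigma z w k ⊔ MeasurableSpace.comap (ε k) inferInstance]) ω
        ≤ N + N * ‖B (x k (Fin.last n) ω)‖ ^ 2)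
    (ρb : ℝ) (hρb : ∀ k, 1 ≤ k → ρ k ≤ ρb) (hρbL : ρb < 1 / L) :
    ∀ ps ∈ extSolSet A B, ∀ k, 1 ≤ k → ∀ᵐ ω ∂P,
      ρ k * (1 - ρb * L) * ‖B (z k ω) - w k (Fin.last n) ω‖ ^ 2
        - 2 * (ρ k) ^ 2 * N * L ^ 3 * pDistSq (z k ω) (fun i => w k i ω) ps
        - (ρ k) ^ 2 * N * L * (1 + 2 * ‖B ps.1‖ ^ 2)
      ≤ (P[fun ω' =>
            ⟪z k ω' - x k (Fin.last n) ω', y k (Fin.last n) ω' - w k (Fin.last n) ω'⟫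
            - ⟪ps.1 - x k (Fin.last n) ω', y k (Fin.last n) ω' - ps.2 (Fin.last n)⟫ |
          spsSigma z w k]) ω :=
  sps_last_gap_lower_bound_general ρ hρ A B L hL hBmono hBlip P z w x y ε e hzm hwm hxl hyl N hN
    hεL2 heL2 hzL2 hwL2 hε0 he0 hεv ρb hρb
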